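/- Let Ω ⊆ ℝⁿ be open, let p > 1 be real, and let u : Ω → ℝᵐ be smooth with Du(x) ≠ 0 for all x ∈ Ω, satisfying the p-harmonic system: for each k, Σ_i ∂/∂x^i ( |Du|^{p−2} ∂u^k/∂x^i ) = 0 on Ω, where |Du|² = Σ_{i,k} (∂u^k/∂x^i)². Then the tensor S_{ij} = |Du|^{p−2} Σ_k (∂u^k/∂x^i)(∂u^k/∂x^j) − (1/p) δ_{ij} |Du|^p satisfies Σ_i ∂S_{ij}/∂x^i = 0 on Ω for each j. -/

import Mathlib

/-!
Noether's computation. Writing `c i k = ∂u^k/∂x^i`, the product rule gives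
`Σ_i ∂_i S_ij = Σ_k c j k · Σ_i ∂_i(|Du|^{p-2} c i k) + |Du|^{p-2} Σ_{i,k} c i k ∂_i c j k
  - (1/p) ∂_j |Du|^p`.
The first sum vanishes by the p-harmonic system. By symmetry of second derivatives
`∂_i c j k = ∂_j c i k`, while the chain rule (valid since `Du ≠ 0`) gives
`∂_j |Du|^p = p |Du|^{p-2} Σ_{i,k} c i k ∂_j c i k`, so the last two terms cancel.
-/

/-- Partial derivative of a scalar function on `ℝⁿ` in the `i`-th coordinate direction. -/
noncomputable def pderiv' {n : ℕ} (i : Fin n) (f : (Fin n → ℝ) → ℝ) (x : Fin n → ℝ) : ℝ :=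
  fderiv ℝ f x (Pi.single i 1)

open Finset Filter Topology

section pderiv'

variable {n : ℕ} {f g : (Fin n → ℝ) → ℝ} {x : Fin n → ℝ} (i : Fin n)

theorem Filter.EventuallyEq.pderiv'_eq (h : f =ᶠ[𝓝 x] g) : pderiv' i f x = pderiv' i g x := by
  rw [pderiv', pderiv', h.fderiv_eq]

theorem pderiv'_mul (hf : DifferentiableAt ℝ f x) (hg : DifferentiableAt ℝ g x) :
    pderiv' i (fun y => f y * g y) x = pderiv' i f x * g x + f x * pderiv' i g x := by
  simp only [pderiv', fderiv_fun_mul hf hg, add_apply, smul_apply, smul_eq_mul]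
  ring

theorem pderiv'_sub (hf : DifferentiableAt ℝ f x) (hg : DifferentiableAt ℝ g x) :
    pderiv' i (fun y => f y - g y) x = pderiv' i f x - pderiv' i g x := by
  simp only [pderiv', fderiv_fun_sub hf hg, sub_apply]

theorem pderiv'_const_mul (hf : DifferentiableAt ℝ f x) (a : ℝ) :
    pderiv' i (fun y => a * f y) x = a * pderiv' i f x := by
  simp only [pderiv', fderiv_const_mul hf, smul_apply, smul_eq_mul]

theorem pderiv'_sum {ι : Type*} (s : Finset ι) {F : ι → (Fin n → ℝ) → ℝ}
    (hF : ∀ l ∈ s, DifferentiableAt ℝ (F l) x) :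
    pderiv' i (fun y => ∑ l ∈ s, F l y) x = ∑ l ∈ s, pderiv' i (F l) x := by
  simp only [pderiv', fderiv_fun_sum hF, _root_.sum_apply]

end pderiv'

section SecondDerivatives

variable {E ι : Type*} [NormedAddCommGroup E] [NormedSpace ℝ E] [Fintype ι]
  {u : E → ι → ℝ} {x : E}

theorem hasFDerivAt_fderiv_apply_apply (hu : DifferentiableAt ℝ (fderiv ℝ u) x) (v : E) (k : ι) :
    HasFDerivAt (fun y => fderiv ℝ u y v k)
      ((ContinuousLinearMap.proj k).comp
        ((ContinuousLinearMap.apply ℝ (ι → ℝ) v).comp (fderiv ℝ (fderiv ℝ u) x))) x :=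
  ((ContinuousLinearMap.proj k).comp (ContinuousLinearMap.apply ℝ (ι → ℝ) v)).hasFDerivAt.comp x
    hu.hasFDerivAt

theorem ContDiffAt.differentiableAt_fderiv (hu : ContDiffAt ℝ 2 u x) :
    DifferentiableAt ℝ (fderiv ℝ u) x :=
  (hu.fderiv_right (m := 1) le_rfl).differentiableAt one_ne_zero

theorem ContDiffAt.fderiv_fderiv_apply_apply_comm (hu : ContDiffAt ℝ 2 u x) (v w : E) (k : ι) :
    fderiv ℝ (fun y => fderiv ℝ u y v k) x w = fderiv ℝ (fun y => fderiv ℝ u y w k) x v := by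
  rw [(hasFDerivAt_fderiv_apply_apply hu.differentiableAt_fderiv v k).fderiv,
    (hasFDerivAt_fderiv_apply_apply hu.differentiableAt_fderiv w k).fderiv]
  exact congrFun ((hu.isSymmSndFDerivAt (by simp)).eq w v) k

end SecondDerivatives

theorem sum_sq_apply_single_ne_zero {n : ℕ} {ι : Type*} [Fintype ι]
    {L : (Fin n → ℝ) →L[ℝ] (ι → ℝ)} (hL : L ≠ 0) :
    ∑ i, ∑ k, L (Pi.single i 1) k ^ 2 ≠ 0 := by
  contrapose! hL
  have hcol : ∀ i, L (Pi.single i 1) = 0 := fun i => funext fun k => by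
    have hrow := (sum_eq_zero_iff_of_nonneg fun i _ => sum_nonneg fun k _ => sq_nonneg
      (L (Pi.single i 1) k)).1 hL i (mem_univ i)
    exact pow_eq_zero_iff two_ne_zero |>.1 <|
      (sum_eq_zero_iff_of_nonneg fun k _ => sq_nonneg _).1 hrow k (mem_univ k)
  refine ContinuousLinearMap.coe_injective (LinearMap.pi_ext fun i t => ?_)
  rw [show (Pi.single i t : Fin n → ℝ) = t • Pi.single i 1 by
    rw [← Pi.single_smul, smul_eq_mul, mul_one]]
  simp [hcol]

theorem hasFDerivAt_sqrt_sum_sq_rpow {E ι κ : Type*} [NormedAddCommGroup E] [NormedSpace ℝ E]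
    [Fintype ι] [Fintype κ] {f : ι → κ → E → ℝ} {f' : ι → κ → E →L[ℝ] ℝ} {x : E}
    (hf : ∀ i k, HasFDerivAt (f i k) (f' i k) x) (hx : ∑ i, ∑ k, f i k x ^ 2 ≠ 0) (q : ℝ) :
    HasFDerivAt (fun y => √(∑ i, ∑ k, f i k y ^ 2) ^ q)
      ((q * √(∑ i, ∑ k, f i k x ^ 2) ^ (q - 2)) • ∑ i, ∑ k, f i k x • f' i k) x := by
  have hsq : HasFDerivAt (fun y => ∑ i, ∑ k, f i k y ^ 2)
      (∑ i, ∑ k, (2 * f i k x) • f' i k) x :=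
    .fun_sum fun i _ => .fun_sum fun k _ => by simpa using (hf i k).pow 2
  have hrpow : ∀ r : ℝ, ∀ y, √(∑ i, ∑ k, f i k y ^ 2) ^ r = (∑ i, ∑ k, f i k y ^ 2) ^ (r / 2) :=
    fun r y => by
      rw [Real.sqrt_eq_rpow, ← Real.rpow_mul (sum_nonneg fun i _ => sum_nonneg fun k _ =>
        sq_nonneg _)]
      ring_nf
  simp only [hrpow]
  convert hsq.rpow_const (p := q / 2) (Or.inl hx) using 1
  simp only [smul_sum, smul_smul]
  congr! 3 with i - k -
  ring_nf

/-- In the application `a = |Du|^{p-2}`, `e = |Du|^p` and `c i k = ∂u^k/∂x^i`. -/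
theorem sum_pderiv'_energyMomentum_eq_zero {n m : ℕ} {x : Fin n → ℝ} {p : ℝ} (hp : p ≠ 0)
    {a e : (Fin n → ℝ) → ℝ} {c : Fin n → Fin m → (Fin n → ℝ) → ℝ} (j : Fin n)
    (ha : DifferentiableAt ℝ a x) (he : DifferentiableAt ℝ e x)
    (hc : ∀ i k, DifferentiableAt ℝ (c i k) x)
    (hc_symm : ∀ i k, pderiv' i (c j k) x = pderiv' j (c i k) x)
    (he_deriv : pderiv' j e x = p * a x * ∑ i, ∑ k, c i k x * pderiv' j (c i k) x)
    (hdiv : ∀ k, ∑ i, pderiv' i (fun y => a y * c i k y) x = 0) :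
    ∑ i, pderiv' i (fun y => a y * (∑ k, c i k y * c j k y) -
      1 / p * (if i = j then 1 else 0) * e y) x = 0 := by
  have hterm : ∀ i, pderiv' i (fun y => a y * (∑ k, c i k y * c j k y) -
      1 / p * (if i = j then 1 else 0) * e y) x =
      ∑ k, (pderiv' i (fun y => a y * c i k y) x * c j k x + a x * c i k x * pderiv' j (c i k) x)
        - 1 / p * (if i = j then 1 else 0) * pderiv' i e x := by
    intro i
    have hV : ∀ k, DifferentiableAt ℝ (fun y => a y * c i k y * c j k y) x :=
      fun k => (ha.fun_mul (hc i k)).fun_mul (hc j k)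
    simp only [mul_sum, ← mul_assoc]
    rw [pderiv'_sub (f := fun y => ∑ k, a y * c i k y * c j k y) _ (.fun_sum fun k _ => hV k)
        (he.const_mul _),
      pderiv'_sum (F := fun k y => a y * c i k y * c j k y) _ _ fun k _ => hV k,
      pderiv'_const_mul _ he,
      sum_congr rfl fun k _ => pderiv'_mul i (ha.fun_mul (hc i k)) (hc j k)]
    simp only [hc_symm]
  have hharm : ∑ i, ∑ k, pderiv' i (fun y => a y * c i k y) x * c j k x = 0 := by
    rw [sum_comm]
    simp only [← sum_mul, hdiv, zero_mul, sum_const_zero]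
  have hkinetic : ∑ i, ∑ k, a x * c i k x * pderiv' j (c i k) x =
      a x * ∑ i, ∑ k, c i k x * pderiv' j (c i k) x := by
    simp only [mul_sum, mul_assoc]
  have hpotential :
      ∑ i, 1 / p * (if i = j then 1 else 0) * pderiv' i e x = 1 / p * pderiv' j e x := by
    simp only [mul_ite, ite_mul, mul_one, mul_zero, zero_mul, sum_ite_eq', mem_univ, if_true]
  rw [sum_congr rfl fun i _ => hterm i, sum_sub_distrib]
  simp only [sum_add_distrib]
  rw [hharm, hkinetic, hpotential, he_deriv]
  field_simp
  ring

/-- The energy-momentum tensor of the `p`-energy functional: if `u` is a smooth solution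
of the `p`-harmonic system on an open set `Ω ⊆ ℝⁿ` with nowhere-vanishing differential,
then `S_{ij} = |Du|^{p−2} Σ_k (∂u^k/∂x^i)(∂u^k/∂x^j) − (1/p) δ_{ij} |Du|^p` is
divergence free. -/
theorem p_harmonic_energy_momentum_div_free
    {n m : ℕ}
    (Ω : Set (Fin n → ℝ)) (hΩ : IsOpen Ω)
    (p : ℝ) (hp : 1 < p)
    (u : (Fin n → ℝ) → (Fin m → ℝ))
    (hu : ContDiffOn ℝ (⊤ : ℕ∞) u Ω)
    -- `Du(x) ≠ 0` on Ω
    (hDu : ∀ x ∈ Ω, fderiv ℝ u x ≠ 0)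
    -- the pointwise norm `|Du|`, with `|Du|² = Σ_{i,k} (∂u^k/∂x^i)²`
    (nDu : (Fin n → ℝ) → ℝ)
    (hnDu : ∀ x ∈ Ω, nDu x =
      Real.sqrt (∑ i : Fin n, ∑ k : Fin m, (fderiv ℝ u x (Pi.single i 1) k) ^ 2))
    -- the p-harmonic system: Σ_i ∂/∂x^i ( |Du|^{p−2} ∂u^k/∂x^i ) = 0 on Ω
    (hpharm : ∀ x ∈ Ω, ∀ k : Fin m,
      ∑ i : Fin n, pderiv' i
        (fun x' => nDu x' ^ (p - 2) * fderiv ℝ u x' (Pi.single i 1) k) x = 0)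
    -- the energy-momentum tensor S
    (S : (Fin n → ℝ) → (Fin n → Fin n → ℝ))
    (hS : ∀ x ∈ Ω, ∀ i j : Fin n, S x i j =
      nDu x ^ (p - 2) *
        (∑ k : Fin m, fderiv ℝ u x (Pi.single i 1) k * fderiv ℝ u x (Pi.single j 1) k) -
        (1 / p) * (if i = j then 1 else 0) * nDu x ^ p) :
    ∀ x ∈ Ω, ∀ j : Fin n, ∑ i : Fin n, pderiv' i (fun x' => S x' i j) x = 0 := by
  intro x hx j
  have hΩx : Ω ∈ 𝓝 x := hΩ.mem_nhds hx
  have hu2 : ContDiffAt ℝ 2 u x := (hu.contDiffAt hΩx).of_le (by norm_cast)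
  have hc : ∀ i k, DifferentiableAt ℝ (fun y => fderiv ℝ u y (Pi.single i 1) k) x :=
    fun i k => (hasFDerivAt_fderiv_apply_apply hu2.differentiableAt_fderiv _ k).differentiableAt
  have hnDu_rpow : ∀ q, HasFDerivAt (fun y => nDu y ^ q) ((q * nDu x ^ (q - 2)) •
      ∑ i, ∑ k, fderiv ℝ u x (Pi.single i 1) k •
        fderiv ℝ (fun y => fderiv ℝ u y (Pi.single i 1) k) x) x := by
    intro q
    rw [hnDu x hx]
    exact (hasFDerivAt_sqrt_sum_sq_rpow (fun i k => (hc i k).hasFDerivAt)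
      (sum_sq_apply_single_ne_zero (hDu x hx)) q).congr_of_eventuallyEq
      (eventuallyEq_of_mem hΩx fun y hy => by rw [hnDu y hy])
  rw [sum_congr rfl fun i _ => (eventuallyEq_of_mem hΩx fun y hy => hS y hy i j).pderiv'_eq i]
  refine sum_pderiv'_energyMomentum_eq_zero (zero_lt_one.trans hp).ne' j
    (hnDu_rpow _).differentiableAt (hnDu_rpow p).differentiableAt hc
    (fun i k => hu2.fderiv_fderiv_apply_apply_comm _ _ k) ?_
    (hpharm x hx)
  simp only [pderiv', (hnDu_rpow p).fderiv, smul_apply, _root_.sum_apply, smul_eq_mul, mul_sum,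
    mul_assoc]
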